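/- Let γ̃^i_j satisfy (★) on U, let Γ^i_{jk} be the associated Christoffel symbols, and let (g_{ij}) be a symmetric matrix of holomorphic functions on U. Then the following are equivalent: (a) g is compatible with the product, i.e. Σ_l c^l_{ik} g_{lj} = Σ_l c^l_{jk} g_{li} for all i,j,k, and ∇_k g_{ij} = (1/2) Σ_l ( c^l_{ik} (dθ)_{lj} + c^l_{jk} (dθ)_{li} ) for all i,j,k; (b) g_{ij} = 0 for i ≠ j and ∂_k g_{ii} = 2 Γ^i_{ik} g_{ii} for all i,k. -/

import Mathlib

noncomputable section

variable {N : ℕ}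

/-- The partial derivative `∂_k = ∂/∂u^k` of a function of `N` complex variables. -/
def pder (k : Fin N) (f : (Fin N → ℂ) → ℂ) : (Fin N → ℂ) → ℂ :=
  fun u => fderiv ℂ f u (Pi.single k 1)

/-- Kronecker delta. -/
def kron (i j : Fin N) : ℂ := if i = j then 1 else 0

/-- The system (★) for the functions `γ̃^i_j` (`i ≠ j`) on `U`. -/
def StarSystem (U : Set (Fin N → ℂ)) (γ : Fin N → Fin N → (Fin N → ℂ) → ℂ) : Prop :=
  (∀ i j k : Fin N, i ≠ j → j ≠ k → i ≠ k → ∀ u ∈ U,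
      pder k (γ i j) u =
        -(γ i j u * γ i k u) + γ i j u * γ j k u + γ i k u * γ k j u) ∧
  (∀ i j : Fin N, i ≠ j → ∀ u ∈ U, ∑ k, pder k (γ i j) u = 0)

/-- Christoffel symbols `Γ^i_{jk}` of the flat F-manifold connection in canonical coordinates,
associated to a solution `γ̃` of (★):  `Γ^i_{jk} = 0` for pairwise distinct `i,j,k`;
`Γ^i_{ij} = Γ^i_{ji} = γ̃^i_j` and `Γ^i_{jj} = −γ̃^i_j` for `i ≠ j`;
`Γ^i_{ii} = −Σ_{k≠i} γ̃^i_k`. -/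
def Gam (γ : Fin N → Fin N → (Fin N → ℂ) → ℂ) (i j k : Fin N) : (Fin N → ℂ) → ℂ :=
  if i = j ∧ i = k then fun u => -∑ l ∈ Finset.univ.erase i, γ i l u
  else if i = j then γ i k
  else if i = k then γ i j
  else if j = k then fun u => -(γ i j u)
  else 0

/-- The counit `θ_j = Σ_i g_{ij}` of a metric `g` (in canonical coordinates, where the structure
constants are `c^i_{jk} = δ^i_j δ^i_k`). -/
def theta (g : Fin N → Fin N → (Fin N → ℂ) → ℂ) (j : Fin N) : (Fin N → ℂ) → ℂ :=
  fun u => ∑ i, g i j u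

/-- `(dθ)_{lj} = ∂_l θ_j − ∂_j θ_l`. -/
def dtheta (g : Fin N → Fin N → (Fin N → ℂ) → ℂ) (l j : Fin N) : (Fin N → ℂ) → ℂ :=
  fun u => pder l (theta g j) u - pder j (theta g l) u

/-- The covariant derivative `∇_k g_{ij}` with respect to the connection with Christoffel
symbols `Γ` associated to `γ̃`. -/
def nablaG (γ : Fin N → Fin N → (Fin N → ℂ) → ℂ) (g : Fin N → Fin N → (Fin N → ℂ) → ℂ)
    (k i j : Fin N) : (Fin N → ℂ) → ℂ :=
  fun u => pder k (g i j) u - (∑ l, Gam γ l k i u * g l j u) - ∑ l, Gam γ l k j u * g i l u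

/-!
Since `c^l_{ik} = δ^l_i δ^l_k`, compatibility with the product reads `δ_{ik} g_{ij} = δ_{jk} g_{ji}`,
i.e. `g` is diagonal. For diagonal `g` on an open set, `θ_j = g_{jj}` there, so
`(dθ)_{lj} = ∂_l g_{jj} − ∂_j g_{ll}` and `∇_k g_{ij} = ∂_k g_{ij} − Γ^j_{ki} g_{jj} − Γ^i_{kj} g_{ii}`.
The component `i = j` of the `∇`-equation is then exactly `∂_k g_{ii} = 2 Γ^i_{ik} g_{ii}`, and
for `i ≠ j` the components follow from it, because `Γ^j_{ki}` and `Γ^i_{kj}` vanish unless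
`k ∈ {i, j}`.
-/

lemma sum_kron_mul_kron_mul (i k : Fin N) (f : Fin N → ℂ) :
    ∑ l, kron l i * kron l k * f l = if i = k then f i else 0 := by
  rw [Finset.sum_eq_single i (fun l _ hl => by simp [kron, hl]) (by simp)]
  simp only [kron]
  split_ifs <;> ring

lemma kron_compatible_iff_offDiag_eq_zero {G : Fin N → Fin N → ℂ}
    (hG : ∀ i j, G i j = G j i) :
    (∀ i j k, ∑ l, kron l i * kron l k * G l j = ∑ l, kron l j * kron l k * G l i) ↔
      ∀ i j, i ≠ j → G i j = 0 := by
  simp only [sum_kron_mul_kron_mul]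
  constructor
  · intro h i j hij
    simpa [Ne.symm hij] using h i j i
  · intro h i j k
    by_cases hik : i = k <;> by_cases hjk : j = k
    · rw [if_pos hik, if_pos hjk, hG]
    · rw [if_pos hik, if_neg hjk, h i j (by rintro rfl; exact hjk hik)]
    · rw [if_neg hik, if_pos hjk, h j i (by rintro rfl; exact hik hjk)]
    · rw [if_neg hik, if_neg hjk]

section Christoffel

variable (γ : Fin N → Fin N → (Fin N → ℂ) → ℂ)

lemma Gam_comm (i j k : Fin N) : Gam γ i j k = Gam γ i k j := by
  unfold Gam
  by_cases hij : i = j <;> by_cases hik : i = k <;> by_cases hjk : j = k <;> simp_all [eq_comm]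

lemma Gam_self_self_of_ne {i k : Fin N} (h : i ≠ k) : Gam γ i i k = γ i k := by
  simp [Gam, h]

lemma Gam_of_ne_self_self {i j : Fin N} (h : j ≠ i) : Gam γ j i i = fun u => -γ j i u := by
  simp [Gam, h]

lemma Gam_eq_zero {l k i : Fin N} (hlk : l ≠ k) (hli : l ≠ i) (hki : k ≠ i) :
    Gam γ l k i = 0 := by
  simp [Gam, hlk, hli, hki]

end Christoffel

lemma pder_congr_of_eqOn {U : Set (Fin N → ℂ)} (hU : IsOpen U) {f h : (Fin N → ℂ) → ℂ}
    (hfh : Set.EqOn f h U) {u : Fin N → ℂ} (hu : u ∈ U) (k : Fin N) :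
    pder k f u = pder k h u := by
  have heq : f =ᶠ[nhds u] h := Filter.eventuallyEq_of_mem (hU.mem_nhds hu) hfh
  rw [pder, pder, heq.fderiv_eq]

section Diagonal

variable {γ g : Fin N → Fin N → (Fin N → ℂ) → ℂ} {U : Set (Fin N → ℂ)} {u : Fin N → ℂ}

lemma dtheta_self (i : Fin N) : dtheta g i i = 0 := by
  funext u
  exact sub_self _

lemma nablaG_of_offDiag_eq_zero (hdiag : ∀ i j, i ≠ j → g i j u = 0) (k i j : Fin N) :
    nablaG γ g k i j u = pder k (g i j) u - Gam γ j k i u * g j j u - Gam γ i k j u * g i i u := by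
  have hleft : ∑ l, Gam γ l k i u * g l j u = Gam γ j k i u * g j j u :=
    Finset.sum_eq_single j (fun l _ hl => by rw [hdiag l j hl, mul_zero]) (by simp)
  have hright : ∑ l, Gam γ l k j u * g i l u = Gam γ i k j u * g i i u :=
    Finset.sum_eq_single i (fun l _ hl => by rw [hdiag i l (Ne.symm hl), mul_zero]) (by simp)
  rw [nablaG, hleft, hright]

variable (hU : IsOpen U) (hdiag : ∀ i j, i ≠ j → ∀ v ∈ U, g i j v = 0)
include hU hdiag

lemma pder_eq_zero_of_offDiag (hu : u ∈ U) {i j : Fin N} (hij : i ≠ j) (k : Fin N) :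
    pder k (g i j) u = 0 := by
  rw [pder_congr_of_eqOn hU (h := fun _ => 0) (fun v hv => hdiag i j hij v hv) hu k]
  simp [pder]

lemma pder_theta_of_offDiag (hu : u ∈ U) (l j : Fin N) :
    pder l (theta g j) u = pder l (g j j) u :=
  pder_congr_of_eqOn hU
    (fun v hv => Finset.sum_eq_single j (fun i _ hi => hdiag i j hi v hv) (by simp)) hu l

variable (hpder : ∀ i k, ∀ v ∈ U, pder k (g i i) v = 2 * Gam γ i i k v * g i i v)
include hpder

lemma dtheta_of_diagonal (hu : u ∈ U) {l j : Fin N} (hlj : l ≠ j) :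
    dtheta g l j u = 2 * γ j l u * g j j u - 2 * γ l j u * g l l u := by
  rw [dtheta, pder_theta_of_offDiag hU hdiag hu, pder_theta_of_offDiag hU hdiag hu,
    hpder j l u hu, hpder l j u hu, Gam_self_self_of_ne γ (Ne.symm hlj),
    Gam_self_self_of_ne γ hlj]

lemma nablaG_of_diagonal (hu : u ∈ U) (i j k : Fin N) :
    nablaG γ g k i j u = (1 / 2 : ℂ) *
      ((if i = k then dtheta g i j u else 0) + if j = k then dtheta g j i u else 0) := by
  rw [nablaG_of_offDiag_eq_zero (fun i j hij => hdiag i j hij u hu)]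
  obtain rfl | hij := eq_or_ne i j
  · rw [hpder i k u hu, Gam_comm γ i k i, dtheta_self]
    simp only [Pi.zero_apply, ite_self]
    ring
  rw [pder_eq_zero_of_offDiag hU hdiag hu hij]
  by_cases hik : i = k
  · subst hik
    rw [if_pos rfl, if_neg (Ne.symm hij), dtheta_of_diagonal hU hdiag hpder hu hij,
      Gam_of_ne_self_self γ (Ne.symm hij), Gam_self_self_of_ne γ hij]
    ring
  by_cases hjk : j = k
  · subst hjk
    rw [if_neg hik, if_pos rfl, dtheta_of_diagonal hU hdiag hpder hu (Ne.symm hij),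
      Gam_of_ne_self_self γ hij, Gam_self_self_of_ne γ (Ne.symm hij)]
    ring
  rw [if_neg hik, if_neg hjk, Gam_eq_zero γ hjk (Ne.symm hij) (Ne.symm hik),
    Gam_eq_zero γ hik hij (Ne.symm hjk)]
  simp

end Diagonal

theorem statement5_general {N : ℕ} (U : Set (Fin N → ℂ)) (hU : IsOpen U)
    (γ : Fin N → Fin N → (Fin N → ℂ) → ℂ)
    (g : Fin N → Fin N → (Fin N → ℂ) → ℂ)
    (hgsym : ∀ i j : Fin N, g i j = g j i) :
    -- (a) compatibility with the product and equation (invariant definition of the metric)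
    ((∀ i j k : Fin N, ∀ u ∈ U,
        ∑ l, kron l i * kron l k * g l j u = ∑ l, kron l j * kron l k * g l i u) ∧
     (∀ i j k : Fin N, ∀ u ∈ U,
        nablaG γ g k i j u
          = (1 / 2 : ℂ) * ∑ l, (kron l i * kron l k * dtheta g l j u
              + kron l j * kron l k * dtheta g l i u)))
    ↔
    -- (b) g is diagonal and ∂_k g_{ii} = 2 Γ^i_{ik} g_{ii}
    ((∀ i j : Fin N, i ≠ j → ∀ u ∈ U, g i j u = 0) ∧
     (∀ i k : Fin N, ∀ u ∈ U, pder k (g i i) u = 2 * Gam γ i i k u * g i i u)) := by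
  have hcompat : ∀ u, (∀ i j k, ∑ l, kron l i * kron l k * g l j u =
      ∑ l, kron l j * kron l k * g l i u) ↔ ∀ i j, i ≠ j → g i j u = 0 :=
    fun u => kron_compatible_iff_offDiag_eq_zero (fun i j => congrFun (hgsym i j) u)
  constructor
  · rintro ⟨hprod, hnabla⟩
    have hdiag : ∀ i j, i ≠ j → ∀ u ∈ U, g i j u = 0 :=
      fun i j hij u hu => (hcompat u).1 (fun i j k => hprod i j k u hu) i j hij
    refine ⟨hdiag, fun i k u hu => ?_⟩
    have h := hnabla i i k u hu
    rw [nablaG_of_offDiag_eq_zero (fun i j hij => hdiag i j hij u hu), Gam_comm γ i k i,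
      Finset.sum_add_distrib, sum_kron_mul_kron_mul, dtheta_self] at h
    simp only [Pi.zero_apply, ite_self, add_zero, mul_zero] at h
    linear_combination h
  · rintro ⟨hdiag, hpder⟩
    exact ⟨fun i j k u hu => (hcompat u).2 (fun i j hij => hdiag i j hij u hu) i j k,
      fun i j k u hu => by
        rw [Finset.sum_add_distrib, sum_kron_mul_kron_mul, sum_kron_mul_kron_mul]
        exact nablaG_of_diagonal hU hdiag hpder hu i j k⟩

/-- For a symmetric matrix `(g_{ij})` of holomorphic functions on a flat
F-manifold in canonical coordinates (structure constants `c^i_{jk} = δ^i_j δ^i_k`), the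
compatibility with the product together with equation
`∇_k g_{ij} = ½ Σ_l ( c^l_{ik} (dθ)_{lj} + c^l_{jk} (dθ)_{li} )` is equivalent to:
`g` is diagonal and `∂_k g_{ii} = 2 Γ^i_{ik} g_{ii}`. -/
theorem statement5 {N : ℕ} (hN : 2 ≤ N) (U : Set (Fin N → ℂ)) (hU : IsOpen U)
    (γ : Fin N → Fin N → (Fin N → ℂ) → ℂ)
    (hhol : ∀ i j : Fin N, i ≠ j → DifferentiableOn ℂ (γ i j) U)
    (hstar : StarSystem U γ)
    (g : Fin N → Fin N → (Fin N → ℂ) → ℂ)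
    (hgsym : ∀ i j : Fin N, g i j = g j i)
    (hghol : ∀ i j : Fin N, DifferentiableOn ℂ (g i j) U) :
    -- (a) compatibility with the product and equation (invariant definition of the metric)
    ((∀ i j k : Fin N, ∀ u ∈ U,
        ∑ l, kron l i * kron l k * g l j u = ∑ l, kron l j * kron l k * g l i u) ∧
     (∀ i j k : Fin N, ∀ u ∈ U,
        nablaG γ g k i j u
          = (1 / 2 : ℂ) * ∑ l, (kron l i * kron l k * dtheta g l j u
              + kron l j * kron l k * dtheta g l i u)))
    ↔
    -- (b) g is diagonal and ∂_k g_{ii} = 2 Γ^i_{ik} g_{ii}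
    ((∀ i j : Fin N, i ≠ j → ∀ u ∈ U, g i j u = 0) ∧
     (∀ i k : Fin N, ∀ u ∈ U, pder k (g i i) u = 2 * Gam γ i i k u * g i i u)) :=
  statement5_general U hU γ g hgsym
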